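/- Intersection equation: for all ξ₀, ξ₁, η₀ ∈ ℂ and r₀ ∈ ℝ, write (z,t) = Φ(ξ₀,η₀,r₀). Then (1/2)(z − 2tξ₁ − conj(z)·ξ₁²) = ((1 + conj(ξ₀)ξ₁)²·η₀ − (ξ₀ − ξ₁)²·conj(η₀)) / (1 + ξ₀·conj(ξ₀))² + (ξ₀ − ξ₁)(1 + conj(ξ₀)ξ₁)·r₀ / (1 + ξ₀·conj(ξ₀)). Consequently an oriented line with direction coordinate ξ₁ passes through the point Φ(ξ₀,η₀,r₀) if and only if its perpendicular coordinate η₁ equals the right-hand side. -/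

import Mathlib

open Complex ComplexConjugate

/-- The map `Φ` sending an oriented line with coordinates `(ξ, η)` and affine
parameter `r` to the corresponding point of `ℝ³ ≃ ℂ × ℝ`. -/
noncomputable def Phi (ξ η : ℂ) (r : ℝ) : ℂ × ℝ :=
  ((2 * (η - conj η * ξ ^ 2) + 2 * ξ * (1 + ξ * conj ξ) * (r : ℂ)) / (1 + ξ * conj ξ) ^ 2,
   (((-2) * (η * conj ξ + conj η * ξ) + (1 - ξ ^ 2 * (conj ξ) ^ 2) * (r : ℂ)) /
      (1 + ξ * conj ξ) ^ 2).re)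

/-- The direction map: the unit vector in `ℝ³ ≃ ℂ × ℝ` with stereographic coordinate `ξ`. -/
noncomputable def dmap (ξ : ℂ) : ℂ × ℝ :=
  (2 * ξ / ((1 : ℂ) + (Complex.normSq ξ : ℂ)),
   (1 - Complex.normSq ξ) / (1 + Complex.normSq ξ))

/-- The Euclidean inner product on `ℝ³ ≃ ℂ × ℝ`. -/
noncomputable def inner3 (p q : ℂ × ℝ) : ℝ := (p.1 * conj q.1).re + p.2 * q.2

/-!
A point `p` determines the line with direction `ξ` through it: `perpCoord ξ (Φ(ξ, η, r)) = η`,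
and conversely `Φ(ξ, perpCoord ξ p, ⟪p, dmap ξ⟫) = p`, i.e. `p` sits at the signed distance
`⟪p, dmap ξ⟫` along that line. Incidence is therefore the single equation `η = perpCoord ξ p`,
and the intersection equation is the evaluation of `perpCoord ξ₁` at `Φ(ξ₀, η₀, r₀)`: a rational
identity in `ξ₀, conj ξ₀, η₀, conj η₀` whose only denominator `1 + ξ₀ conj ξ₀ = 1 + |ξ₀|²`
never vanishes.
-/

noncomputable def perpCoord (ξ : ℂ) (p : ℂ × ℝ) : ℂ :=
  (1 / 2) * (p.1 - 2 * (p.2 : ℂ) * ξ - conj p.1 * ξ ^ 2)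

lemma one_add_mul_conj_ne_zero (ξ : ℂ) : 1 + ξ * conj ξ ≠ 0 := by
  rw [mul_conj]
  exact_mod_cast (add_pos_of_pos_of_nonneg one_pos (normSq_nonneg ξ)).ne'

theorem perpCoord_Phi (ξ₀ ξ₁ η₀ : ℂ) (r₀ : ℝ) :
    perpCoord ξ₁ (Phi ξ₀ η₀ r₀)
      = ((1 + conj ξ₀ * ξ₁) ^ 2 * η₀ - (ξ₀ - ξ₁) ^ 2 * conj η₀) / (1 + ξ₀ * conj ξ₀) ^ 2
        + (ξ₀ - ξ₁) * (1 + conj ξ₀ * ξ₁) * (r₀ : ℂ) / (1 + ξ₀ * conj ξ₀) := by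
  have h := one_add_mul_conj_ne_zero ξ₀
  simp only [perpCoord, Phi, re_eq_add_conj, map_div₀, map_add, map_mul, map_sub, map_pow,
    map_one, map_neg, map_ofNat, conj_conj, conj_ofReal, mul_comm (conj ξ₀) ξ₀]
  field_simp
  ring

theorem perpCoord_Phi_self (ξ η : ℂ) (r : ℝ) : perpCoord ξ (Phi ξ η r) = η := by
  have h := one_add_mul_conj_ne_zero ξ
  rw [perpCoord_Phi, sub_self, mul_comm (conj ξ) ξ]
  field_simp
  ring

theorem ofReal_inner3_dmap (ξ : ℂ) (p : ℂ × ℝ) :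
    (inner3 p (dmap ξ) : ℂ)
      = (p.1 * conj ξ + conj p.1 * ξ + p.2 * (1 - ξ * conj ξ)) / (1 + ξ * conj ξ) := by
  have h := one_add_mul_conj_ne_zero ξ
  simp only [inner3, dmap, mul_conj]
  push_cast
  simp only [re_eq_add_conj, ← mul_conj, map_div₀, map_add, map_mul, map_one, conj_conj,
    map_ofNat]
  rw [mul_comm (conj ξ) ξ] at *
  field_simp

theorem Phi_perpCoord_inner3_dmap (ξ : ℂ) (p : ℂ × ℝ) :
    Phi ξ (perpCoord ξ p) (inner3 p (dmap ξ)) = p := by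
  have h := one_add_mul_conj_ne_zero ξ
  ext
  · simp only [Phi, perpCoord, ofReal_inner3_dmap, map_div₀, map_mul, map_sub, map_pow, map_one,
      map_ofNat, conj_conj, conj_ofReal]
    field_simp
    ring
  · apply ofReal_injective
    simp only [Phi, perpCoord, re_eq_add_conj, ofReal_inner3_dmap, map_div₀, map_add, map_mul,
      map_sub, map_pow, map_one, map_neg, map_ofNat, conj_conj, conj_ofReal, mul_comm (conj ξ) ξ]
    field_simp
    ring

theorem exists_Phi_eq_iff (ξ η : ℂ) (p : ℂ × ℝ) :
    (∃ r : ℝ, Phi ξ η r = p) ↔ η = perpCoord ξ p := by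
  constructor
  · rintro ⟨r, rfl⟩
    exact (perpCoord_Phi_self ξ η r).symm
  · rintro rfl
    exact ⟨_, Phi_perpCoord_inner3_dmap ξ p⟩

/-- Intersection equation: with `(z,t) = Φ(ξ₀,η₀,r₀)`, the perpendicular coordinate
`½(z − 2tξ₁ − conj z · ξ₁²)` of the line with direction `ξ₁` through `(z,t)` equals the
stated expression; consequently an oriented line `(ξ₁,η₁)` passes through `Φ(ξ₀,η₀,r₀)`
iff `η₁` equals that expression. -/
theorem intersection_equation (ξ₀ ξ₁ η₀ : ℂ) (r₀ : ℝ) :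
    (1 / 2) * ((Phi ξ₀ η₀ r₀).1 - 2 * (((Phi ξ₀ η₀ r₀).2 : ℝ) : ℂ) * ξ₁
        - conj (Phi ξ₀ η₀ r₀).1 * ξ₁ ^ 2)
      = ((1 + conj ξ₀ * ξ₁) ^ 2 * η₀ - (ξ₀ - ξ₁) ^ 2 * conj η₀) / (1 + ξ₀ * conj ξ₀) ^ 2
        + (ξ₀ - ξ₁) * (1 + conj ξ₀ * ξ₁) * (r₀ : ℂ) / (1 + ξ₀ * conj ξ₀) ∧
    ∀ η₁ : ℂ,
      ((∃ r₁ : ℝ, Phi ξ₁ η₁ r₁ = Phi ξ₀ η₀ r₀) ↔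
        η₁ = ((1 + conj ξ₀ * ξ₁) ^ 2 * η₀ - (ξ₀ - ξ₁) ^ 2 * conj η₀) /
            (1 + ξ₀ * conj ξ₀) ^ 2
          + (ξ₀ - ξ₁) * (1 + conj ξ₀ * ξ₁) * (r₀ : ℂ) / (1 + ξ₀ * conj ξ₀)) := by
  refine ⟨perpCoord_Phi ξ₀ ξ₁ η₀ r₀, fun η₁ => ?_⟩
  rw [exists_Phi_eq_iff, perpCoord_Phi]
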